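/- Let ζ = (ζ₁,ζ₂,ζ₃) ∈ {−1,0,1}³ with ζ ≠ (0,0,0) and λ₁, λ₂, λ₃ > 0, with f and ∇ as in the context. Then (∇_X f)(Y) = 0 for all X, Y ∈ m if and only if one of the following holds: (ζ₁,ζ₂,ζ₃) = ±(1,−1,1), λ₂ > λ₁ and λ₃ = λ₂ − λ₁; (ζ₁,ζ₂,ζ₃) = ±(1,1,−1) and λ₃ = λ₁ + λ₂; (ζ₁,ζ₂,ζ₃) = ±(1,−1,−1), λ₁ > λ₂ and λ₃ = λ₁ − λ₂. In particular, the flag manifold SU(3)/T_max admits no invariant Kähler f-structures of rank 2 or 4, i.e., none with some ζ_j = 0. -/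

import Mathlib

open ComplexConjugate Matrix

noncomputable section

/-- The matrix D(a,b,c) ∈ su(3): zero diagonal, X₁₂ = a, X₂₁ = −conj a,
X₂₃ = b, X₃₂ = −conj b, X₁₃ = conj c, X₃₁ = −c. -/
def Dm (a b c : ℂ) : Matrix (Fin 3) (Fin 3) ℂ :=
  !![0, a, conj c; -conj a, 0, b; -c, -conj b, 0]

/-- The real Lie algebra su(3) of traceless skew-Hermitian 3×3 complex
matrices (as a set of matrices, with bracket [X,Y] = XY − YX). -/
def su3 : Set (Matrix (Fin 3) (Fin 3) ℂ) :=
  {X | Xᴴ = -X ∧ X.trace = 0}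

/-- h: the diagonal matrices in su(3). -/
def hSet : Set (Matrix (Fin 3) (Fin 3) ℂ) :=
  {X | X ∈ su3 ∧ ∀ i j, i ≠ j → X i j = 0}

/-- m = {D(a,b,c)}. -/
def mSet : Set (Matrix (Fin 3) (Fin 3) ℂ) :=
  {X | ∃ a b c : ℂ, X = Dm a b c}

/-- The three components m₁, m₂, m₃ of m. -/
def mComp : Fin 3 → Set (Matrix (Fin 3) (Fin 3) ℂ) :=
  ![{X | ∃ a : ℂ, X = Dm a 0 0}, {X | ∃ b : ℂ, X = Dm 0 b 0},
    {X | ∃ c : ℂ, X = Dm 0 0 c}]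

/-- ⟨X,Y⟩₀ = −½ Re tr(XY). -/
def inner0 (X Y : Matrix (Fin 3) (Fin 3) ℂ) : ℝ :=
  -(1 / 2) * ((X * Y).trace).re

end

noncomputable section

/-- The m-component of a matrix in su(3) = h ⊕ m (h the diagonal part):
zero out the diagonal. -/
def projm (Z : Matrix (Fin 3) (Fin 3) ℂ) : Matrix (Fin 3) (Fin 3) ℂ :=
  Z - Matrix.diagonal fun i => Z i i

/-- Projections of m onto its components m₁, m₂, m₃. -/
def mProj : Fin 3 → (Matrix (Fin 3) (Fin 3) ℂ → Matrix (Fin 3) (Fin 3) ℂ) :=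
  ![fun X => Dm (X 0 1) 0 0, fun X => Dm 0 (X 1 2) 0, fun X => Dm 0 0 (-(X 2 0))]

/-- The invariant metric g = (λ₁,λ₂,λ₃): g(X,Y) = Σ_j λ_j ⟨X_j, Y_j⟩₀ for
X, Y ∈ m, where X_j is the m_j-component; m₁, m₂, m₃ are mutually
orthogonal. -/
def gmet (lam : Fin 3 → ℝ) (X Y : Matrix (Fin 3) (Fin 3) ℂ) : ℝ :=
  ∑ j : Fin 3, lam j * inner0 (mProj j X) (mProj j Y)

end

noncomputable section

/-- The invariant f-structure with characteristic collection (ζ₁,ζ₂,ζ₃):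
f(D(a,b,c)) = D(ζ₁ia, ζ₂ib, ζ₃ic). -/
def fm (z : Fin 3 → ℝ) (X : Matrix (Fin 3) (Fin 3) ℂ) :
    Matrix (Fin 3) (Fin 3) ℂ :=
  Dm ((z 0 : ℂ) * Complex.I * X 0 1) ((z 1 : ℂ) * Complex.I * X 1 2)
    ((z 2 : ℂ) * Complex.I * (-(X 2 0)))

/-- The Nomizu function α(X,Y) = ½[X,Y]_m + U(X,Y) of the Levi-Civita
connection. -/
def alphaU (U : Matrix (Fin 3) (Fin 3) ℂ → Matrix (Fin 3) (Fin 3) ℂ →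
      Matrix (Fin 3) (Fin 3) ℂ)
    (X Y : Matrix (Fin 3) (Fin 3) ℂ) : Matrix (Fin 3) (Fin 3) ℂ :=
  (1 / 2 : ℝ) • projm ⁅X, Y⁆ + U X Y

/-- The covariant derivative (∇_X f)(Y) = α(X, fY) − f(α(X,Y)). -/
def nablaU (U : Matrix (Fin 3) (Fin 3) ℂ → Matrix (Fin 3) (Fin 3) ℂ →
      Matrix (Fin 3) (Fin 3) ℂ)
    (z : Fin 3 → ℝ) (X Y : Matrix (Fin 3) (Fin 3) ℂ) :
    Matrix (Fin 3) (Fin 3) ℂ :=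
  alphaU U X (fm z Y) - fm z (alphaU U X Y)

/-- The composition tensor T(X,Y) = ¼ f((∇_{fX} f)(fY) − (∇_{f²X} f)(f²Y)). -/
def TU (U : Matrix (Fin 3) (Fin 3) ℂ → Matrix (Fin 3) (Fin 3) ℂ →
      Matrix (Fin 3) (Fin 3) ℂ)
    (z : Fin 3 → ℝ) (X Y : Matrix (Fin 3) (Fin 3) ℂ) :
    Matrix (Fin 3) (Fin 3) ℂ :=
  (1 / 4 : ℝ) • fm z (nablaU U z (fm z X) (fm z Y) -
    nablaU U z (fm z (fm z X)) (fm z (fm z Y)))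

end

/-!
Nondegeneracy of `g` on `m` makes the defining identity of `U` determine it: on `m`,
`U(D(a,b,c), D(p,q,r)) = D(μ₁ conj(br + cq), μ₂ conj(ar + cp), μ₃ conj(aq + bp))` with
`μ₁ = (λ₃ − λ₂)/2λ₁`, `μ₂ = (λ₁ − λ₃)/2λ₂`, `μ₃ = (λ₂ − λ₁)/2λ₃`. Substituting this into
`∇f` shows that its components are multiples of `(ζ₁ + ζ₃)(λ₂ − λ₃ − λ₁)`,
`(ζ₁ + ζ₂)(λ₁ + λ₂ − λ₃)` and `(ζ₂ + ζ₃)(λ₂ + λ₃ − λ₁)`, so `∇f = 0` iff these three vanish.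
For positive `λ` no two of the metric factors vanish together, so two of the sums `ζᵢ + ζⱼ`
vanish; with `ζ ≠ 0` this forces `ζ = ±(1,−1,1), ±(1,1,−1)` or `±(1,−1,−1)` together with the
vanishing of the matching metric factor, and no `ζⱼ` is zero.
-/

@[simp] lemma Dm_apply_00 (a b c : ℂ) : Dm a b c 0 0 = 0 := rfl
@[simp] lemma Dm_apply_01 (a b c : ℂ) : Dm a b c 0 1 = a := rfl
@[simp] lemma Dm_apply_02 (a b c : ℂ) : Dm a b c 0 2 = conj c := rfl
@[simp] lemma Dm_apply_10 (a b c : ℂ) : Dm a b c 1 0 = -conj a := rfl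
@[simp] lemma Dm_apply_11 (a b c : ℂ) : Dm a b c 1 1 = 0 := rfl
@[simp] lemma Dm_apply_12 (a b c : ℂ) : Dm a b c 1 2 = b := rfl
@[simp] lemma Dm_apply_20 (a b c : ℂ) : Dm a b c 2 0 = -c := rfl
@[simp] lemma Dm_apply_21 (a b c : ℂ) : Dm a b c 2 1 = -conj b := rfl
@[simp] lemma Dm_apply_22 (a b c : ℂ) : Dm a b c 2 2 = 0 := rfl

lemma Dm_mem_mSet (a b c : ℂ) : Dm a b c ∈ mSet := ⟨a, b, c, rfl⟩

lemma Dm_zero : Dm 0 0 0 = 0 := by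
  ext i j; fin_cases i <;> fin_cases j <;> simp [Dm]

lemma Dm_add (a b c p q r : ℂ) : Dm a b c + Dm p q r = Dm (a + p) (b + q) (c + r) := by
  ext i j; fin_cases i <;> fin_cases j <;> simp [Dm] <;> ring

lemma Dm_sub (a b c p q r : ℂ) : Dm a b c - Dm p q r = Dm (a - p) (b - q) (c - r) := by
  ext i j; fin_cases i <;> fin_cases j <;> simp [Dm] <;> ring

lemma Dm_smul (t : ℝ) (a b c : ℂ) : t • Dm a b c = Dm (t * a) (t * b) (t * c) := by
  ext i j; fin_cases i <;> fin_cases j <;> simp [Dm, Complex.real_smul]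

lemma Dm_eq_zero_iff {a b c : ℂ} : Dm a b c = 0 ↔ a = 0 ∧ b = 0 ∧ c = 0 := by
  refine ⟨fun h => ⟨?_, ?_, ?_⟩, ?_⟩
  · simpa [Dm] using congrFun (congrFun h 0) 1
  · simpa [Dm] using congrFun (congrFun h 1) 2
  · simpa [Dm] using congrFun (congrFun h 2) 0
  · rintro ⟨rfl, rfl, rfl⟩
    exact Dm_zero

lemma fm_Dm (z : Fin 3 → ℝ) (a b c : ℂ) :
    fm z (Dm a b c) = Dm (z 0 * Complex.I * a) (z 1 * Complex.I * b) (z 2 * Complex.I * c) := by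
  simp [fm, Dm]

lemma fm_mem_mSet (z : Fin 3 → ℝ) (X : Matrix (Fin 3) (Fin 3) ℂ) : fm z X ∈ mSet :=
  Dm_mem_mSet _ _ _

lemma projm_bracket_Dm (a b c p q r : ℂ) :
    projm ⁅Dm a b c, Dm p q r⁆ =
      Dm (conj (b * r - c * q)) (conj (c * p - a * r)) (conj (a * q - b * p)) := by
  ext i j
  fin_cases i <;> fin_cases j <;>
    simp [projm, Ring.lie_def, Matrix.diagonal, Dm] <;>
    ring

lemma gmet_Dm (lam : Fin 3 → ℝ) (a b c p q r : ℂ) :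
    gmet lam (Dm a b c) (Dm p q r) =
      lam 0 * (a * conj p).re + lam 1 * (b * conj q).re + lam 2 * (c * conj r).re := by
  simp only [gmet, mProj, Fin.sum_univ_three, inner0, Matrix.trace_fin_three, Matrix.mul_apply,
    Matrix.cons_val_zero, Matrix.cons_val_one, Matrix.cons_val_two, Matrix.tail_cons,
    Matrix.head_cons, Dm_apply_00, Dm_apply_01, Dm_apply_02, Dm_apply_10, Dm_apply_11,
    Dm_apply_12, Dm_apply_20, Dm_apply_21, Dm_apply_22]
  simp only [Complex.add_re, Complex.mul_re, Complex.neg_re, Complex.neg_im, Complex.conj_re,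
    Complex.conj_im, Complex.zero_re, Complex.zero_im, map_zero]
  ring

lemma eq_of_forall_gmet_eq {lam : Fin 3 → ℝ} (hlam : ∀ j, 0 < lam j)
    {X Y : Matrix (Fin 3) (Fin 3) ℂ} (hX : X ∈ mSet) (hY : Y ∈ mSet)
    (h : ∀ Z ∈ mSet, gmet lam X Z = gmet lam Y Z) : X = Y := by
  obtain ⟨a, b, c, rfl⟩ := hX
  obtain ⟨p, q, r, rfl⟩ := hY
  have hdiff := h _ (Dm_mem_mSet (a - p) (b - q) (c - r))
  simp only [gmet_Dm] at hdiff
  have normSq_sub : ∀ x y : ℂ,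
      Complex.normSq (x - y) = (x * conj (x - y)).re - (y * conj (x - y)).re := by
    intro x y
    rw [← Complex.sub_re, ← sub_mul, Complex.mul_conj, Complex.ofReal_re]
  have hsum : lam 0 * Complex.normSq (a - p) + lam 1 * Complex.normSq (b - q)
      + lam 2 * Complex.normSq (c - r) = 0 := by
    rw [normSq_sub, normSq_sub, normSq_sub]; linarith
  have h0 := mul_nonneg (hlam 0).le (Complex.normSq_nonneg (a - p))
  have h1 := mul_nonneg (hlam 1).le (Complex.normSq_nonneg (b - q))
  have h2 := mul_nonneg (hlam 2).le (Complex.normSq_nonneg (c - r))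
  obtain ⟨hab, hc⟩ := (add_eq_zero_iff_of_nonneg (add_nonneg h0 h1) h2).mp hsum
  obtain ⟨ha, hb⟩ := (add_eq_zero_iff_of_nonneg h0 h1).mp hab
  simp only [mul_eq_zero, (hlam _).ne', false_or, Complex.normSq_eq_zero, sub_eq_zero]
    at ha hb hc
  rw [ha, hb, hc]

noncomputable def leviCivitaU (lam : Fin 3 → ℝ) (X Y : Matrix (Fin 3) (Fin 3) ℂ) :
    Matrix (Fin 3) (Fin 3) ℂ :=
  Dm (((lam 2 - lam 1) / (2 * lam 0) : ℝ) * conj (X 1 2 * -Y 2 0 + -X 2 0 * Y 1 2))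
    (((lam 0 - lam 2) / (2 * lam 1) : ℝ) * conj (X 0 1 * -Y 2 0 + -X 2 0 * Y 0 1))
    (((lam 1 - lam 0) / (2 * lam 2) : ℝ) * conj (X 0 1 * Y 1 2 + X 1 2 * Y 0 1))

lemma leviCivitaU_Dm (lam : Fin 3 → ℝ) (a b c p q r : ℂ) :
    leviCivitaU lam (Dm a b c) (Dm p q r) =
      Dm (((lam 2 - lam 1) / (2 * lam 0) : ℝ) * conj (b * r + c * q))
        (((lam 0 - lam 2) / (2 * lam 1) : ℝ) * conj (a * r + c * p))
        (((lam 1 - lam 0) / (2 * lam 2) : ℝ) * conj (a * q + b * p)) := by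
  simp only [leviCivitaU, Dm_apply_01, Dm_apply_12, Dm_apply_20, neg_neg]

lemma leviCivitaU_mem_mSet (lam : Fin 3 → ℝ) (X Y : Matrix (Fin 3) (Fin 3) ℂ) :
    leviCivitaU lam X Y ∈ mSet :=
  Dm_mem_mSet _ _ _

lemma two_mul_gmet_leviCivitaU {lam : Fin 3 → ℝ} (hlam : ∀ j, lam j ≠ 0)
    {X Y Z : Matrix (Fin 3) (Fin 3) ℂ} (hX : X ∈ mSet) (hY : Y ∈ mSet) (hZ : Z ∈ mSet) :
    2 * gmet lam (leviCivitaU lam X Y) Z =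
      gmet lam X (projm ⁅Z, Y⁆) + gmet lam (projm ⁅Z, X⁆) Y := by
  obtain ⟨a, b, c, rfl⟩ := hX
  obtain ⟨p, q, r, rfl⟩ := hY
  obtain ⟨u, v, w, rfl⟩ := hZ
  have h0 := hlam 0
  have h1 := hlam 1
  have h2 := hlam 2
  rw [leviCivitaU_Dm, projm_bracket_Dm, projm_bracket_Dm, gmet_Dm, gmet_Dm, gmet_Dm]
  simp only [Complex.mul_re, Complex.mul_im, Complex.add_re, Complex.add_im,
    Complex.sub_re, Complex.sub_im, Complex.conj_re, Complex.conj_im, Complex.ofReal_re,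
    Complex.ofReal_im]
  field_simp
  ring

lemma eq_leviCivitaU {lam : Fin 3 → ℝ} (hlam : ∀ j, 0 < lam j)
    {U : Matrix (Fin 3) (Fin 3) ℂ → Matrix (Fin 3) (Fin 3) ℂ → Matrix (Fin 3) (Fin 3) ℂ}
    (hUmem : ∀ X ∈ mSet, ∀ Y ∈ mSet, U X Y ∈ mSet)
    (hUdef : ∀ X ∈ mSet, ∀ Y ∈ mSet, ∀ Z ∈ mSet,
      2 * gmet lam (U X Y) Z = gmet lam X (projm ⁅Z, Y⁆) + gmet lam (projm ⁅Z, X⁆) Y)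
    {X Y : Matrix (Fin 3) (Fin 3) ℂ} (hX : X ∈ mSet) (hY : Y ∈ mSet) :
    U X Y = leviCivitaU lam X Y :=
  eq_of_forall_gmet_eq hlam (hUmem X hX Y hY) (leviCivitaU_mem_mSet lam X Y) fun Z hZ => by
    linarith [hUdef X hX Y hY Z hZ,
      two_mul_gmet_leviCivitaU (fun j => (hlam j).ne') hX hY hZ]

lemma nablaU_congr {U U' : Matrix (Fin 3) (Fin 3) ℂ → Matrix (Fin 3) (Fin 3) ℂ →
      Matrix (Fin 3) (Fin 3) ℂ} (h : ∀ X ∈ mSet, ∀ Y ∈ mSet, U X Y = U' X Y)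
    (z : Fin 3 → ℝ) {X Y : Matrix (Fin 3) (Fin 3) ℂ} (hX : X ∈ mSet) (hY : Y ∈ mSet) :
    nablaU U z X Y = nablaU U' z X Y := by
  simp only [nablaU, alphaU, h X hX Y hY, h X hX _ (fm_mem_mSet z Y)]

lemma nablaU_leviCivitaU_Dm (z : Fin 3 → ℝ) {lam : Fin 3 → ℝ} (hlam : ∀ j, lam j ≠ 0)
    (a b c p q r : ℂ) :
    nablaU (leviCivitaU lam) z (Dm a b c) (Dm p q r) =
      Dm (Complex.I / (2 * lam 0) *
          (((z 0 + z 2) * (lam 1 - lam 2 - lam 0) : ℝ) * conj (b * r) +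
            ((z 0 + z 1) * (lam 0 + lam 1 - lam 2) : ℝ) * conj (c * q)))
        (Complex.I / (2 * lam 1) *
          (((z 1 + z 2) * (lam 1 + lam 2 - lam 0) : ℝ) * conj (a * r) -
            ((z 0 + z 1) * (lam 0 + lam 1 - lam 2) : ℝ) * conj (c * p)))
        (-Complex.I / (2 * lam 2) *
          (((z 1 + z 2) * (lam 1 + lam 2 - lam 0) : ℝ) * conj (a * q) +
            ((z 0 + z 2) * (lam 1 - lam 2 - lam 0) : ℝ) * conj (b * p))) := by
  have h0 : (lam 0 : ℂ) ≠ 0 := Complex.ofReal_ne_zero.mpr (hlam 0)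
  have h1 : (lam 1 : ℂ) ≠ 0 := Complex.ofReal_ne_zero.mpr (hlam 1)
  have h2 : (lam 2 : ℂ) ≠ 0 := Complex.ofReal_ne_zero.mpr (hlam 2)
  rw [nablaU, alphaU, alphaU, fm_Dm, leviCivitaU_Dm, leviCivitaU_Dm, projm_bracket_Dm,
    projm_bracket_Dm, Dm_smul, Dm_smul, Dm_add, Dm_add, fm_Dm, Dm_sub]
  congr 1 <;>
    · simp only [map_mul, map_add, map_sub, Complex.conj_ofReal, Complex.conj_I,
        Complex.ofReal_div, Complex.ofReal_mul, Complex.ofReal_add, Complex.ofReal_sub,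
        Complex.ofReal_one, Complex.ofReal_ofNat]
      field_simp
      ring

lemma forall_nablaU_leviCivitaU_eq_zero_iff (z : Fin 3 → ℝ) {lam : Fin 3 → ℝ}
    (hlam : ∀ j, lam j ≠ 0) :
    (∀ X ∈ mSet, ∀ Y ∈ mSet, nablaU (leviCivitaU lam) z X Y = 0) ↔
      (z 0 + z 2) * (lam 1 - lam 2 - lam 0) = 0 ∧
      (z 0 + z 1) * (lam 0 + lam 1 - lam 2) = 0 ∧
      (z 1 + z 2) * (lam 1 + lam 2 - lam 0) = 0 := by
  constructor
  · intro h
    have e1 := h _ (Dm_mem_mSet 0 1 0) _ (Dm_mem_mSet 0 0 1)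
    have e2 := h _ (Dm_mem_mSet 0 0 1) _ (Dm_mem_mSet 0 1 0)
    have e3 := h _ (Dm_mem_mSet 1 0 0) _ (Dm_mem_mSet 0 0 1)
    simp only [nablaU_leviCivitaU_Dm z hlam, Complex.ofReal_mul, Complex.ofReal_add,
      Complex.ofReal_sub, mul_one, map_one, mul_zero, map_zero, add_zero, sub_self, zero_add,
      sub_zero, Dm_eq_zero_iff, mul_eq_zero, div_eq_zero_iff, Complex.I_ne_zero,
      OfNat.ofNat_ne_zero, Complex.ofReal_eq_zero, hlam, or_self, false_or, and_self, and_true,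
      true_and] at e1 e2 e3
    simp only [mul_eq_zero]
    exact ⟨mod_cast e1, mod_cast e2, mod_cast e3⟩
  · rintro ⟨h1, h2, h3⟩ X ⟨a, b, c, rfl⟩ Y ⟨p, q, r, rfl⟩
    simp [nablaU_leviCivitaU_Dm z hlam, h1, h2, h3, Dm_zero]

lemma kahler_condition_iff {z : Fin 3 → ℝ} (hz : ∀ j, z j = -1 ∨ z j = 0 ∨ z j = 1)
    (hz0 : ¬(z 0 = 0 ∧ z 1 = 0 ∧ z 2 = 0)) {lam : Fin 3 → ℝ} (hlam : ∀ j, 0 < lam j) :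
    ((z 0 + z 2) * (lam 1 - lam 2 - lam 0) = 0 ∧
     (z 0 + z 1) * (lam 0 + lam 1 - lam 2) = 0 ∧
     (z 1 + z 2) * (lam 1 + lam 2 - lam 0) = 0) ↔
      ((((z 0 = 1 ∧ z 1 = -1 ∧ z 2 = 1) ∨ (z 0 = -1 ∧ z 1 = 1 ∧ z 2 = -1)) ∧
          lam 0 < lam 1 ∧ lam 2 = lam 1 - lam 0) ∨
      (((z 0 = 1 ∧ z 1 = 1 ∧ z 2 = -1) ∨ (z 0 = -1 ∧ z 1 = -1 ∧ z 2 = 1)) ∧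
          lam 2 = lam 0 + lam 1) ∨
      (((z 0 = 1 ∧ z 1 = -1 ∧ z 2 = -1) ∨ (z 0 = -1 ∧ z 1 = 1 ∧ z 2 = 1)) ∧
          lam 1 < lam 0 ∧ lam 2 = lam 0 - lam 1)) := by
  have := hlam 0; have := hlam 1; have := hlam 2
  rcases hz 0 with h0 | h0 | h0 <;> rcases hz 1 with h1 | h1 | h1 <;>
    rcases hz 2 with h2 | h2 | h2 <;> grind

theorem stmt_10_general (z : Fin 3 → ℝ) (hz : ∀ j, z j = -1 ∨ z j = 0 ∨ z j = 1)
    (hz0 : ¬(z 0 = 0 ∧ z 1 = 0 ∧ z 2 = 0))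
    (lam : Fin 3 → ℝ) (hlam : ∀ j, 0 < lam j)
    (U : Matrix (Fin 3) (Fin 3) ℂ → Matrix (Fin 3) (Fin 3) ℂ →
      Matrix (Fin 3) (Fin 3) ℂ)
    (hUmem : ∀ X ∈ mSet, ∀ Y ∈ mSet, U X Y ∈ mSet)
    (hUdef : ∀ X ∈ mSet, ∀ Y ∈ mSet, ∀ Z ∈ mSet,
      2 * gmet lam (U X Y) Z =
        gmet lam X (projm ⁅Z, Y⁆) + gmet lam (projm ⁅Z, X⁆) Y) :
    ((∀ X ∈ mSet, ∀ Y ∈ mSet, nablaU U z X Y = 0) ↔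
      (((z 0 = 1 ∧ z 1 = -1 ∧ z 2 = 1) ∨ (z 0 = -1 ∧ z 1 = 1 ∧ z 2 = -1)) ∧
          lam 0 < lam 1 ∧ lam 2 = lam 1 - lam 0) ∨
      (((z 0 = 1 ∧ z 1 = 1 ∧ z 2 = -1) ∨ (z 0 = -1 ∧ z 1 = -1 ∧ z 2 = 1)) ∧
          lam 2 = lam 0 + lam 1) ∨
      (((z 0 = 1 ∧ z 1 = -1 ∧ z 2 = -1) ∨ (z 0 = -1 ∧ z 1 = 1 ∧ z 2 = 1)) ∧
          lam 1 < lam 0 ∧ lam 2 = lam 0 - lam 1)) ∧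
    ((z 0 = 0 ∨ z 1 = 0 ∨ z 2 = 0) →
      ¬(∀ X ∈ mSet, ∀ Y ∈ mSet, nablaU U z X Y = 0)) := by
  have hU : ∀ X ∈ mSet, ∀ Y ∈ mSet, U X Y = leviCivitaU lam X Y :=
    fun X hX Y hY => eq_leviCivitaU hlam hUmem hUdef hX hY
  have hnabla : (∀ X ∈ mSet, ∀ Y ∈ mSet, nablaU U z X Y = 0) ↔
      ∀ X ∈ mSet, ∀ Y ∈ mSet, nablaU (leviCivitaU lam) z X Y = 0 :=
    forall₂_congr fun X hX => forall₂_congr fun Y hY => by rw [nablaU_congr hU z hX hY]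
  have hkahler := hnabla.trans <|
    (forall_nablaU_leviCivitaU_eq_zero_iff z fun j => (hlam j).ne').trans <|
      kahler_condition_iff hz hz0 hlam
  refine ⟨hkahler, fun hzero hall => ?_⟩
  have hclassified := hkahler.mp hall
  grind

/-- Invariant Kähler f-structures on the flag manifold SU(3)/T_max:
∇f = 0 holds exactly for the characteristic collections ±(1,−1,1) with
λ₂ > λ₁, λ₃ = λ₂ − λ₁; ±(1,1,−1) with λ₃ = λ₁ + λ₂; ±(1,−1,−1) with
λ₁ > λ₂, λ₃ = λ₁ − λ₂. In particular, there are no invariant Kähler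
f-structures of rank 2 or 4. -/
theorem stmt_10 (z : Fin 3 → ℝ) (hz : ∀ j, z j = -1 ∨ z j = 0 ∨ z j = 1)
    (hz0 : ¬(z 0 = 0 ∧ z 1 = 0 ∧ z 2 = 0))
    (lam : Fin 3 → ℝ) (hlam : ∀ j, 0 < lam j)
    (U : Matrix (Fin 3) (Fin 3) ℂ → Matrix (Fin 3) (Fin 3) ℂ →
      Matrix (Fin 3) (Fin 3) ℂ)
    (hUmem : ∀ X ∈ mSet, ∀ Y ∈ mSet, U X Y ∈ mSet)
    (hUsymm : ∀ X ∈ mSet, ∀ Y ∈ mSet, U X Y = U Y X)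
    (hUdef : ∀ X ∈ mSet, ∀ Y ∈ mSet, ∀ Z ∈ mSet,
      2 * gmet lam (U X Y) Z =
        gmet lam X (projm ⁅Z, Y⁆) + gmet lam (projm ⁅Z, X⁆) Y) :
    ((∀ X ∈ mSet, ∀ Y ∈ mSet, nablaU U z X Y = 0) ↔
      (((z 0 = 1 ∧ z 1 = -1 ∧ z 2 = 1) ∨ (z 0 = -1 ∧ z 1 = 1 ∧ z 2 = -1)) ∧
          lam 0 < lam 1 ∧ lam 2 = lam 1 - lam 0) ∨
      (((z 0 = 1 ∧ z 1 = 1 ∧ z 2 = -1) ∨ (z 0 = -1 ∧ z 1 = -1 ∧ z 2 = 1)) ∧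
          lam 2 = lam 0 + lam 1) ∨
      (((z 0 = 1 ∧ z 1 = -1 ∧ z 2 = -1) ∨ (z 0 = -1 ∧ z 1 = 1 ∧ z 2 = 1)) ∧
          lam 1 < lam 0 ∧ lam 2 = lam 0 - lam 1)) ∧
    ((z 0 = 0 ∨ z 1 = 0 ∨ z 2 = 0) →
      ¬(∀ X ∈ mSet, ∀ Y ∈ mSet, nablaU U z X Y = 0)) :=
  stmt_10_general z hz hz0 lam hlam U hUmem hUdef
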